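/- arXiv:1903.02103 — 2 statements merged into one kernel-verified Lean document; each statement's English description precedes it below -/
import Mathlib

section
/- Let (β_n) be a sequence of positive reals with n² β_n → ∞ and n β_n log log n → 0 as n → ∞. For x ≥ 0 set φ_n(x) = x/√(2 log(n² β_n)) + √(2 log(n² β_n)) − log log(n² β_n)/√(2 log(n² β_n)). Then for every fixed x ≥ 0, S_n(φ_n(x)) := Σ_{i=1}^{n} Q( i β_n/2 , φ_n(x)²/2 ) → e^{−x}/4 as n → ∞, where Q(a,z) = (1/Γ(a)) ∫_z^∞ t^{a−1} e^{−t} dt is the regularized upper incomplete Gamma function. -/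
open Filter Real

/-- The regularized upper incomplete Gamma function
`Q(a,z) = (1/Γ(a)) ∫_z^∞ t^(a-1) e^(-t) dt`. -/
noncomputable def regIncGamma (a z : ℝ) : ℝ :=
  (1 / Real.Gamma a) * ∫ t in Set.Ioi z, t ^ (a - 1) * Real.exp (-t)

/-!
For small `a > 0` we have `a ≤ 1 / Γ(a) ≤ a / (1 - 2a)`, and for `z ≥ 1` the tail integral
`∫_z^∞ t^(a-1) e^(-t) dt` lies between `e^(-z) / (z + 1)` and `z^(a-1) e^(-z)`. Hence every term
`Q(iβ/2, z)` with `i ≤ n` is `(iβ/2) e^(-z) / z` up to factors `z / (z + 1)` and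
`z^(nβ/2) / (1 - nβ)`, both tending to `1` once `nβ log z → 0`, and summing over `i` gives
`S_n ≈ n (n + 1) β / 4 · e^(-z) / z`. With `L = log (n²β)`, the level `z = φ_n(x)² / 2` equals
`L + u + u² / (4L)` with `u = x - log L`, so `z ~ L` and `e^(L - z) ~ L e^(-x)`; since
`n²β = e^L`, the main term tends to `e^(-x) / 4`.
-/

open Set MeasureTheory

lemma integral_rpow_mul_exp_neg_Ioi_le {a z : ℝ} (ha : a ≤ 1) (hz : 0 < z) :
    ∫ t in Ioi z, t ^ (a - 1) * exp (-t) ≤ z ^ (a - 1) * exp (-z) := by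
  calc ∫ t in Ioi z, t ^ (a - 1) * exp (-t)
      ≤ ∫ t in Ioi z, z ^ (a - 1) * exp (-t) := by
        refine setIntegral_mono_of_nonneg (fun t ht => ?_) (fun t ht => ?_)
          ((exp_neg_integrableOn_Ioi z one_pos).congr_fun (fun t _ => by simp) measurableSet_Ioi
            |>.const_mul _)
        · have : 0 < t := hz.trans ht
          positivity
        · exact mul_le_mul_of_nonneg_right (rpow_le_rpow_of_nonpos hz ht.le (by linarith))
            (exp_pos _).le
    _ = z ^ (a - 1) * exp (-z) := by rw [integral_const_mul, integral_exp_neg_Ioi]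

lemma exp_neg_div_le_integral_rpow_mul_exp_neg_Ioi {a z : ℝ} (ha : 0 < a) (hz : 1 ≤ z) :
    exp (-z) / (z + 1) ≤ ∫ t in Ioi z, t ^ (a - 1) * exp (-t) := by
  have hz0 : 0 < z := by linarith
  have hc : 0 < (z + 1) / z := by positivity
  -- `t / z ≤ exp (t / z - 1)` gives `t⁻¹ ≥ (e / z) exp (-t / z)` for `t ≥ z`
  have hpoint : ∀ t ∈ Ioi z,
      exp 1 / z * exp (-((z + 1) / z) * t) ≤ t ^ (a - 1) * exp (-t) := by
    intro t ht
    have ht1 : 1 ≤ t := hz.trans (le_of_lt ht)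
    have ht0 : 0 < t := by linarith
    have hinv : t⁻¹ ≤ t ^ (a - 1) := by
      rw [← rpow_neg_one]
      exact rpow_le_rpow_of_exponent_le ht1 (by linarith)
    have htangent : t / z ≤ exp (t / z - 1) := by linarith [add_one_le_exp (t / z - 1)]
    calc exp 1 / z * exp (-((z + 1) / z) * t) = exp (-(t / z - 1)) / z * exp (-t) := by
          simp only [div_mul_eq_mul_div, ← exp_add]
          congr 2
          field_simp
          ring
      _ ≤ (t / z)⁻¹ / z * exp (-t) := by
          rw [exp_neg]
          gcongr
      _ = t⁻¹ * exp (-t) := by field_simp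
      _ ≤ t ^ (a - 1) * exp (-t) := by gcongr
  have hint : IntegrableOn (fun t => t ^ (a - 1) * exp (-t)) (Ioi z) :=
    ((GammaIntegral_convergent ha).mono_set (Ioi_subset_Ioi hz0.le)).congr_fun
      (fun t _ => mul_comm _ _) measurableSet_Ioi
  have hint' : IntegrableOn (fun t => exp 1 / z * exp (-((z + 1) / z) * t)) (Ioi z) :=
    (exp_neg_integrableOn_Ioi z hc).const_mul _
  calc exp (-z) / (z + 1) = ∫ t in Ioi z, exp 1 / z * exp (-((z + 1) / z) * t) := by
        rw [integral_const_mul, integral_exp_mul_Ioi (neg_neg_of_pos hc),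
          show -((z + 1) / z) * z = -z + -1 by field_simp; ring, exp_add, exp_neg 1]
        field_simp
    _ ≤ _ := setIntegral_mono_on hint' hint measurableSet_Ioi hpoint

lemma Gamma_add_one_le_one {a : ℝ} (h0 : 0 ≤ a) (h1 : a ≤ 1) : Gamma (a + 1) ≤ 1 := by
  have h := convexOn_Gamma.2 (by norm_num : (1 : ℝ) ∈ Ioi 0) (by norm_num : (2 : ℝ) ∈ Ioi 0)
    (sub_nonneg.2 h1) h0 (sub_add_cancel 1 a)
  rw [show (1 - a) • (1 : ℝ) + a • 2 = a + 1 by simp; ring, Gamma_one, Gamma_two] at h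
  simpa using h

lemma one_sub_two_mul_le_Gamma_add_one {a : ℝ} (ha : 0 < a) : 1 - 2 * a ≤ Gamma (a + 1) := by
  -- slopes of the convex `Gamma` on `1/2 < 1 < 1 + a`, with `Gamma (1/2) = √π ≤ 2`
  have h := convexOn_Gamma.slope_mono_adjacent (by norm_num : (1 / 2 : ℝ) ∈ Ioi 0)
    (by simp; linarith : 1 + a ∈ Ioi 0) (by norm_num : (1 / 2 : ℝ) < 1) (by linarith : 1 < 1 + a)
  rw [Gamma_one, Gamma_one_half_eq, add_sub_cancel_left, le_div_iff₀ ha, add_comm] at h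
  have hπ : √π ≤ 2 := sqrt_le_iff.2 ⟨by norm_num, by linarith [pi_le_four]⟩
  have hslope : -2 ≤ (1 - √π) / (1 - 1 / 2) := by rw [le_div_iff₀ (by norm_num)]; linarith
  nlinarith

lemma le_one_div_Gamma {a : ℝ} (h0 : 0 < a) (h1 : a ≤ 1) : a ≤ 1 / Gamma a := by
  rw [le_div_iff₀ (Gamma_pos_of_pos h0), ← Gamma_add_one h0.ne']
  exact Gamma_add_one_le_one h0.le h1

lemma one_div_Gamma_le {a : ℝ} (h0 : 0 < a) (h1 : a < 1 / 2) : 1 / Gamma a ≤ a / (1 - 2 * a) := by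
  rw [div_le_div_iff₀ (Gamma_pos_of_pos h0) (by linarith), one_mul, ← Gamma_add_one h0.ne']
  linarith [one_sub_two_mul_le_Gamma_add_one h0]

lemma mul_exp_neg_div_le_regIncGamma {a z : ℝ} (h0 : 0 < a) (h1 : a ≤ 1) (hz : 1 ≤ z) :
    a * (exp (-z) / (z + 1)) ≤ regIncGamma a z :=
  mul_le_mul (le_one_div_Gamma h0 h1) (exp_neg_div_le_integral_rpow_mul_exp_neg_Ioi h0 hz)
    (by positivity) (by have := Gamma_pos_of_pos h0; positivity)

lemma regIncGamma_le {a z : ℝ} (h0 : 0 < a) (h1 : a < 1 / 2) (hz : 1 ≤ z) :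
    regIncGamma a z ≤ a / (1 - 2 * a) * (z ^ (a - 1) * exp (-z)) :=
  mul_le_mul (one_div_Gamma_le h0 h1) (integral_rpow_mul_exp_neg_Ioi_le (by linarith) (by linarith))
    ((exp_neg_div_le_integral_rpow_mul_exp_neg_Ioi h0 hz).trans' (by positivity))
    (div_nonneg h0.le (by linarith))

lemma sum_Icc_natCast_mul_div_two_mul (n : ℕ) (β c : ℝ) :
    ∑ i ∈ Finset.Icc 1 n, (i : ℝ) * β / 2 * c = n * (n + 1) * β / 4 * c := by
  induction n with
  | zero => simp
  | succ m ih =>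
    rw [Finset.sum_Icc_succ_top (by omega), ih]
    push_cast
    ring

lemma le_sum_regIncGamma {β z : ℝ} (hβ : 0 < β) {n : ℕ} (hnβ : n * β ≤ 2) (hz : 1 ≤ z) :
    n * (n + 1) * β / 4 * (exp (-z) / (z + 1)) ≤
      ∑ i ∈ Finset.Icc 1 n, regIncGamma (i * β / 2) z := by
  rw [← sum_Icc_natCast_mul_div_two_mul]
  refine Finset.sum_le_sum fun i hi => mul_exp_neg_div_le_regIncGamma ?_ ?_ hz
  · have : (1 : ℝ) ≤ i := by exact_mod_cast (Finset.mem_Icc.1 hi).1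
    positivity
  · have : (i : ℝ) ≤ n := by exact_mod_cast (Finset.mem_Icc.1 hi).2
    nlinarith

lemma sum_regIncGamma_le {β z : ℝ} (hβ : 0 < β) {n : ℕ} (hnβ : n * β < 1) (hz : 1 ≤ z) :
    ∑ i ∈ Finset.Icc 1 n, regIncGamma (i * β / 2) z ≤
      n * (n + 1) * β / 4 * (z ^ (n * β / 2 - 1) * exp (-z) / (1 - n * β)) := by
  rw [← sum_Icc_natCast_mul_div_two_mul]
  refine Finset.sum_le_sum fun i hi => ?_
  have hi1 : (1 : ℝ) ≤ i := by exact_mod_cast (Finset.mem_Icc.1 hi).1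
  have hin : (i : ℝ) * β ≤ n * β := by
    gcongr
    exact_mod_cast (Finset.mem_Icc.1 hi).2
  have ha : 0 < (i : ℝ) * β / 2 := by positivity
  calc regIncGamma (i * β / 2) z
      ≤ i * β / 2 / (1 - 2 * (i * β / 2)) * (z ^ (i * β / 2 - 1) * exp (-z)) :=
        regIncGamma_le ha (by linarith) hz
    _ ≤ i * β / 2 * (z ^ (n * β / 2 - 1) * exp (-z) / (1 - n * β)) := by
        rw [div_mul_eq_mul_div, mul_div_assoc]
        gcongr i * β / 2 * (?_ * _ / ?_)
        · exact rpow_le_rpow_of_exponent_le hz (by linarith)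
        · linarith

lemma tendsto_zero_of_mul_tendsto_zero_of_tendsto_atTop {ι : Type*} {l : Filter ι} {f g : ι → ℝ}
    (hfg : Tendsto (fun i => f i * g i) l (nhds 0)) (hg : Tendsto g l atTop) :
    Tendsto f l (nhds 0) := by
  have h := hfg.mul hg.inv_tendsto_atTop
  rw [zero_mul] at h
  refine h.congr' ?_
  filter_upwards [hg.eventually_gt_atTop 0] with i hi
  simp only [Pi.inv_apply]
  field_simp

lemma tendsto_sum_regIncGamma {β z : ℕ → ℝ} {c : ℝ} (hβ : ∀ n, 0 < β n)
    (hz : Tendsto z atTop atTop) (hlog : Tendsto (fun n => n * β n * log (z n)) atTop (nhds 0))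
    (hmain : Tendsto (fun n => n * (n + 1) * β n / 4 * (exp (-z n) / z n)) atTop (nhds c)) :
    Tendsto (fun n => ∑ i ∈ Finset.Icc 1 n, regIncGamma (i * β n / 2) (z n)) atTop (nhds c) := by
  have hnβ : Tendsto (fun n => n * β n) atTop (nhds 0) :=
    tendsto_zero_of_mul_tendsto_zero_of_tendsto_atTop hlog (tendsto_log_atTop.comp hz)
  have hlower : Tendsto (fun n => z n / (z n + 1)) atTop (nhds 1) := by
    have h : Tendsto (fun n => (z n + 1)⁻¹) atTop (nhds 0) :=
      (tendsto_atTop_add_const_right _ 1 hz).inv_tendsto_atTop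
    refine (by simpa using h.const_sub 1 : Tendsto (fun n => 1 - (z n + 1)⁻¹) _ _).congr' ?_
    filter_upwards [hz.eventually_gt_atTop 0] with n hn
    field_simp
    ring
  have hupper : Tendsto (fun n => z n ^ (n * β n / 2) / (1 - n * β n)) atTop (nhds 1) := by
    have hpow : Tendsto (fun n => exp (n * β n * log (z n) / 2)) atTop (nhds 1) := by
      simpa [Function.comp_def] using
        (continuous_exp.tendsto 0).comp (by simpa using hlog.div_const 2)
    have hden : Tendsto (fun n => 1 - n * β n) atTop (nhds 1) := by
      simpa using hnβ.const_sub 1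
    have h := hpow.div hden one_ne_zero
    rw [div_one] at h
    refine h.congr' ?_
    filter_upwards [hz.eventually_gt_atTop 0] with n hn
    rw [Pi.div_apply, rpow_def_of_pos hn]
    ring_nf
  refine tendsto_of_tendsto_of_tendsto_of_le_of_le' (by simpa using hmain.mul hlower)
    (by simpa using hmain.mul hupper) ?_ ?_
  all_goals filter_upwards [hz.eventually_ge_atTop 1, hnβ.eventually_lt_const one_pos] with n hz1 hnβ1
  · refine le_of_eq_of_le ?_ (le_sum_regIncGamma (hβ n) (by linarith) hz1)
    field_simp
  · refine (sum_regIncGamma_le (hβ n) hnβ1 hz1).trans_eq ?_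
    rw [rpow_sub_one (by positivity)]
    ring

-- `φ_n(x)² / 2` as a function of `L = log (n²β_n)`
noncomputable def gumbelLevel (x L : ℝ) : ℝ := L + (x - log L) + (x - log L) ^ 2 / (4 * L)

lemma sq_div_two_eq_gumbelLevel {L : ℝ} (hL : 0 < L) (x : ℝ) :
    (x / √(2 * L) + √(2 * L) - log L / √(2 * L)) ^ 2 / 2 = gumbelLevel x L := by
  have hs : √(2 * L) ^ 2 = 2 * L := sq_sqrt (by linarith)
  have hs0 : √(2 * L) ≠ 0 := (sqrt_pos.2 (by linarith)).ne'
  rw [show x / √(2 * L) + √(2 * L) - log L / √(2 * L) = (x - log L + √(2 * L) ^ 2) / √(2 * L) by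
    field_simp; ring, div_pow, hs, gumbelLevel]
  field_simp
  ring

lemma tendsto_sub_log_sq_div_atTop (x : ℝ) :
    Tendsto (fun L => (x - log L) ^ 2 / (4 * L)) atTop (nhds 0) := by
  have hpow (k : ℕ) : Tendsto (fun L => log L ^ k / (4 * L + 0)) atTop (nhds 0) :=
    tendsto_pow_log_div_mul_add_atTop 4 0 k (by norm_num)
  have h := ((hpow 0).const_mul (x ^ 2)).sub ((hpow 1).const_mul (2 * x)) |>.add (hpow 2)
  simp only [mul_zero, sub_zero, add_zero] at h
  refine h.congr fun L => ?_
  ring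

lemma tendsto_gumbelLevel_div_self (x : ℝ) :
    Tendsto (fun L => gumbelLevel x L / L) atTop (nhds 1) := by
  have hlog : Tendsto (fun L => log L / L) atTop (nhds 0) := by
    simpa using tendsto_pow_log_div_mul_add_atTop 1 0 1 one_ne_zero
  have h := ((tendsto_inv_atTop_zero.const_mul x).sub hlog).add
    ((tendsto_sub_log_sq_div_atTop x).mul tendsto_inv_atTop_zero) |>.const_add 1
  simp only [mul_zero, sub_zero, add_zero] at h
  refine h.congr' ?_
  filter_upwards [eventually_gt_atTop 0] with L hL
  rw [gumbelLevel]
  field_simp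
  ring

lemma tendsto_exp_sub_gumbelLevel_div_gumbelLevel (x : ℝ) :
    Tendsto (fun L => exp (L - gumbelLevel x L) / gumbelLevel x L) atTop (nhds (exp (-x))) := by
  have hcorr : Tendsto (fun L => exp (-((x - log L) ^ 2 / (4 * L)))) atTop (nhds 1) := by
    simpa [Function.comp_def] using
      (continuous_exp.tendsto 0).comp (by simpa using (tendsto_sub_log_sq_div_atTop x).neg)
  have h := ((hcorr.mul ((tendsto_gumbelLevel_div_self x).inv₀ one_ne_zero)).const_mul (exp (-x)))
  simp only [inv_one, mul_one] at h
  refine h.congr' ?_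
  filter_upwards [eventually_gt_atTop 0] with L hL
  rw [show L - gumbelLevel x L = log L + -x + -((x - log L) ^ 2 / (4 * L)) by rw [gumbelLevel]; ring,
    exp_add, exp_add, exp_log hL, inv_div]
  ring

lemma tendsto_mul_log_gumbelLevel {β : ℕ → ℝ} (hβ : ∀ n, 0 < β n)
    (hβ1 : Tendsto (fun n : ℕ => (n : ℝ) ^ 2 * β n) atTop atTop)
    (hβ2 : Tendsto (fun n : ℕ => (n : ℝ) * β n * log (log n)) atTop (nhds 0)) (x : ℝ) :
    Tendsto (fun n : ℕ => n * β n * log (gumbelLevel x (log (n ^ 2 * β n)))) atTop (nhds 0) := by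
  have hnβ : Tendsto (fun n : ℕ => n * β n) atTop (nhds 0) :=
    tendsto_zero_of_mul_tendsto_zero_of_tendsto_atTop hβ2
      (tendsto_log_atTop.comp (tendsto_log_atTop.comp tendsto_natCast_atTop_atTop))
  have hL : Tendsto (fun n : ℕ => log ((n : ℝ) ^ 2 * β n)) atTop atTop :=
    tendsto_log_atTop.comp hβ1
  have hloglog : Tendsto (fun n : ℕ => n * β n * log (log (n ^ 2 * β n))) atTop (nhds 0) := by
    refine tendsto_of_tendsto_of_tendsto_of_le_of_le' tendsto_const_nhds hβ2 ?_ ?_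
    all_goals filter_upwards [hL.eventually_ge_atTop 1,
      hnβ.eventually_le_const one_pos, eventually_ge_atTop 1] with n hL hnβ1 hn
    all_goals have hnβ0 : 0 ≤ n * β n := mul_nonneg n.cast_nonneg (hβ n).le
    · exact mul_nonneg hnβ0 (log_nonneg hL)
    · have hn1 : (1 : ℝ) ≤ n := by exact_mod_cast hn
      have hB : 0 < (n : ℝ) ^ 2 * β n := by have := hβ n; positivity
      have hL0 : 0 < log ((n : ℝ) ^ 2 * β n) := by linarith
      have hBn : (n : ℝ) ^ 2 * β n ≤ n := by nlinarith
      gcongr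
  have hratio := (tendsto_gumbelLevel_div_self x).comp hL
  have hlogratio := (continuousAt_log one_ne_zero).tendsto.comp hratio
  rw [log_one] at hlogratio
  have h := hloglog.add (hnβ.mul hlogratio)
  rw [zero_add, zero_mul] at h
  refine h.congr' ?_
  filter_upwards [hL.eventually_gt_atTop 0, hratio.eventually (lt_mem_nhds one_pos)] with n hLn hq
  have hz : 0 < gumbelLevel x (log (n ^ 2 * β n)) := (div_pos_iff_of_pos_right hLn).1 hq
  simp only [Function.comp_apply]
  rw [log_div hz.ne' hLn.ne']
  ring

/-- **Convergence of the sum of chi survival functions, regime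
`1/n² ≪ β ≪ 1/(n log log n)`:** `S_n(φ_n(x)) → e^{-x}/4`. -/
theorem sum_survival_first_regime (β : ℕ → ℝ) (hβpos : ∀ n, 0 < β n)
    (hβ1 : Tendsto (fun n : ℕ => (n : ℝ) ^ 2 * β n) atTop atTop)
    (hβ2 : Tendsto (fun n : ℕ => (n : ℝ) * β n * Real.log (Real.log n)) atTop (nhds 0))
    (φ : ℕ → ℝ → ℝ)
    (hφ : ∀ n : ℕ, ∀ x : ℝ, 0 ≤ x →
      φ n x = x / Real.sqrt (2 * Real.log ((n : ℝ) ^ 2 * β n))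
        + Real.sqrt (2 * Real.log ((n : ℝ) ^ 2 * β n))
        - Real.log (Real.log ((n : ℝ) ^ 2 * β n))
            / Real.sqrt (2 * Real.log ((n : ℝ) ^ 2 * β n)))
    (x : ℝ) (hx : 0 ≤ x) :
    Tendsto (fun n : ℕ =>
        ∑ i ∈ Finset.Icc 1 n, regIncGamma ((i : ℝ) * β n / 2) (φ n x ^ 2 / 2))
      atTop (nhds (Real.exp (-x) / 4)) := by
  set L : ℕ → ℝ := fun n => log ((n : ℝ) ^ 2 * β n)
  have hL : Tendsto L atTop atTop := tendsto_log_atTop.comp hβ1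
  have hz : Tendsto (fun n => gumbelLevel x (L n)) atTop atTop := by
    refine (((tendsto_gumbelLevel_div_self x).comp hL).pos_mul_atTop one_pos hL).congr' ?_
    filter_upwards [hL.eventually_gt_atTop 0] with n hn
    simp only [Function.comp_apply]
    field_simp
  -- `n (n + 1) β_n = (1 + 1 / n) exp (L n)`
  have hmain : Tendsto (fun n => n * (n + 1) * β n / 4 *
      (exp (-gumbelLevel x (L n)) / gumbelLevel x (L n))) atTop (nhds (exp (-x) / 4)) := by
    have h := ((tendsto_one_div_atTop_nhds_zero_nat.const_add 1).div_const 4).mul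
      ((tendsto_exp_sub_gumbelLevel_div_gumbelLevel x).comp hL)
    rw [add_zero, one_div_mul_eq_div] at h
    refine h.congr' ?_
    filter_upwards [eventually_ge_atTop 1] with n hn
    have hB : 0 < (n : ℝ) ^ 2 * β n := by have := hβpos n; positivity
    simp only [Function.comp_apply, L]
    rw [exp_sub, exp_log hB, exp_neg]
    field_simp
  refine (tendsto_sum_regIncGamma hβpos hz (tendsto_mul_log_gumbelLevel hβpos hβ1 hβ2 x)
    hmain).congr' ?_
  filter_upwards [hL.eventually_gt_atTop 0] with n hn
  rw [hφ n x hx, sq_div_two_eq_gumbelLevel hn]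
end

section
/- Let γ ∈ (0,1), and for x ≥ 0 set a_n = √(2 log(n/(γ log log n))) and φ_n(x) = x/a_n + a_n + [ (γ/2 − 1) log log(n/(γ log log n)) − log(2^{−γ/2} Γ(γ)) ] / a_n. Then for all fixed 0 ≤ x < y < ∞, max_{1 ≤ i ≤ n} ( Q( γ i/n , φ_n(x)²/2 ) − Q( γ i/n , φ_n(y)²/2 ) ) → 0 as n → ∞, where Q(a,z) = (1/Γ(a)) ∫_z^∞ t^{a−1} e^{−t} dt. -/
/-!
For `b = γ i / n ∈ (0, 1]` and `t ≥ 1` the Gamma integrand satisfies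
`t ^ (b - 1) e^(-t) ≤ e^(-t)`, so, `Q(b, ·)` being nonnegative and antitone, every term of the
maximum lies between `0` and `e^(-φ_n(x)² / 2) / Γ(b)` once `φ_n(x) ≥ 2`. Since `1 / Γ` is entire
it is bounded on `[0, 1]`, and `φ_n(x) → ∞` because `a_n → ∞` while the correction terms are
`o(a_n)`.
-/

open Filter Real

open MeasureTheory Asymptotics Set Topology

namespace Real

theorem biSup_mem_Icc {ι : Type*} {p : ι → Prop} {f : ι → ℝ} {B : ℝ} (hB : 0 ≤ B)
    (h : ∀ i, p i → f i ∈ Icc 0 B) : ⨆ i, ⨆ (_ : p i), f i ∈ Icc 0 B :=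
  ⟨Real.iSup_nonneg fun i => Real.iSup_nonneg fun hi => (h i hi).1,
    Real.iSup_le (fun i => Real.iSup_le (fun hi => (h i hi).2) hB) hB⟩

theorem continuous_one_div_Gamma : Continuous fun s : ℝ => 1 / Gamma s := by
  have h : (fun s : ℝ => 1 / Gamma s) = fun s : ℝ => ((Complex.Gamma (s : ℂ))⁻¹).re := by
    ext s
    rw [Complex.Gamma_ofReal, ← Complex.ofReal_inv, Complex.ofReal_re, one_div]
  rw [h]
  exact Complex.continuous_re.comp
    (Complex.differentiable_one_div_Gamma.continuous.comp Complex.continuous_ofReal)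

theorem isLittleO_log_sqrt_two_mul_atTop : log =o[atTop] fun u => √(2 * u) := by
  have h : (fun u : ℝ => √(2 * u)) = fun u => √2 * u ^ (1 / 2 : ℝ) := by
    ext u
    rw [sqrt_mul zero_le_two, sqrt_eq_rpow u]
  rw [h, isLittleO_const_mul_right_iff (by positivity)]
  exact isLittleO_log_rpow_atTop one_half_pos

theorem tendsto_sqrt_two_mul_atTop : Tendsto (fun u : ℝ => √(2 * u)) atTop atTop :=
  tendsto_sqrt_atTop.comp (tendsto_id.const_mul_atTop two_pos)

theorem isLittleO_log_log_atTop : (fun u => log (log u)) =o[atTop] id :=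
  (isLittleO_log_id_atTop.comp_tendsto tendsto_log_atTop).trans isLittleO_log_id_atTop

end Real

open Real

theorem tendsto_div_mul_log_log_atTop {γ : ℝ} (hγ : 0 < γ) :
    Tendsto (fun u => u / (γ * log (log u))) atTop atTop := by
  have hpos : ∀ᶠ u in atTop, 0 < γ * log (log u) / u := by
    filter_upwards [(tendsto_log_atTop.comp tendsto_log_atTop).eventually_gt_atTop 0,
      eventually_gt_atTop 0] with u hu hu0
    exact div_pos (mul_pos hγ hu) hu0
  have h := (isLittleO_log_log_atTop.const_mul_left γ).tendsto_div_nhds_zero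
  simpa only [Pi.inv_def, id, inv_div] using
    (tendsto_nhdsWithin_iff.2 ⟨h, hpos⟩).inv_tendsto_nhdsGT_zero

theorem tendsto_sqrt_two_mul_add_div_atTop (x c K : ℝ) :
    Tendsto (fun u => x / √(2 * u) + √(2 * u) + (c * log u - K) / √(2 * u))
      atTop atTop := by
  have hK : (fun _ : ℝ => K) =o[atTop] fun u => √(2 * u) :=
    isLittleO_const_left.2 (Or.inr (tendsto_norm_atTop_atTop.comp tendsto_sqrt_two_mul_atTop))
  have hlog : Tendsto (fun u => (c * log u - K) / √(2 * u)) atTop (𝓝 0) :=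
    ((isLittleO_log_sqrt_two_mul_atTop.const_mul_left c).sub hK).tendsto_div_nhds_zero
  exact ((tendsto_const_nhds.div_atTop tendsto_sqrt_two_mul_atTop).add_atTop
    tendsto_sqrt_two_mul_atTop).atTop_add hlog

section regIncGamma

variable {b z w : ℝ}

theorem integrableOn_rpow_mul_exp_neg_Ioi (hb : 0 < b) (hz : 0 ≤ z) :
    IntegrableOn (fun t : ℝ => t ^ (b - 1) * exp (-t)) (Ioi z) :=
  ((GammaIntegral_convergent hb).mono_set (Ioi_subset_Ioi hz)).congr_fun
    (fun _ _ => mul_comm _ _) measurableSet_Ioi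

theorem rpow_mul_exp_neg_nonneg_of_mem_Ioi (hz : 0 ≤ z) {t : ℝ} (ht : t ∈ Ioi z) :
    0 ≤ t ^ (b - 1) * exp (-t) := by
  have : 0 < t := hz.trans_lt ht
  positivity

theorem regIncGamma_nonneg (hb : 0 < b) (hz : 0 ≤ z) : 0 ≤ regIncGamma b z :=
  mul_nonneg (one_div_nonneg.2 (Gamma_pos_of_pos hb).le)
    (setIntegral_nonneg measurableSet_Ioi fun _ => rpow_mul_exp_neg_nonneg_of_mem_Ioi hz)

theorem regIncGamma_le_of_le (hb : 0 < b) (hz : 0 ≤ z) (hzw : z ≤ w) :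
    regIncGamma b w ≤ regIncGamma b z := by
  refine mul_le_mul_of_nonneg_left ?_ (one_div_nonneg.2 (Gamma_pos_of_pos hb).le)
  exact setIntegral_mono_set (integrableOn_rpow_mul_exp_neg_Ioi hb hz)
    (ae_restrict_of_forall_mem measurableSet_Ioi fun _ => rpow_mul_exp_neg_nonneg_of_mem_Ioi hz)
    (Ioi_subset_Ioi hzw).eventuallyLE

theorem regIncGamma_le_one_div_Gamma_mul_exp_neg (hb : b ∈ Ioc 0 1) (hz : 1 ≤ z) :
    regIncGamma b z ≤ 1 / Gamma b * exp (-z) := by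
  refine mul_le_mul_of_nonneg_left ?_ (one_div_nonneg.2 (Gamma_pos_of_pos hb.1).le)
  rw [← integral_exp_neg_Ioi z]
  refine setIntegral_mono_on (integrableOn_rpow_mul_exp_neg_Ioi hb.1 (by linarith))
    (integrableOn_exp_neg_Ioi z) measurableSet_Ioi fun t ht => ?_
  have ht1 : 1 ≤ t := hz.trans (le_of_lt ht)
  exact mul_le_of_le_one_left (exp_pos _).le
    (rpow_le_one_of_one_le_of_nonpos ht1 (by linarith [hb.2]))

theorem regIncGamma_sub_mem_Icc (hb : b ∈ Ioc 0 1) (hz : 1 ≤ z) (hzw : z ≤ w) :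
    regIncGamma b z - regIncGamma b w ∈ Icc 0 (1 / Gamma b * exp (-z)) :=
  ⟨sub_nonneg.2 (regIncGamma_le_of_le hb.1 (by linarith) hzw),
    (sub_le_self _ (regIncGamma_nonneg hb.1 (by linarith))).trans
      (regIncGamma_le_one_div_Gamma_mul_exp_neg hb hz)⟩

end regIncGamma

theorem biSup_regIncGamma_sub_mem_Icc {γ C z w : ℝ} (hγ : γ ∈ Ioc 0 1)
    (hC : ∀ b ∈ Ioc 0 1, 1 / Gamma b ≤ C) (hz : 1 ≤ z) (hzw : z ≤ w) (n : ℕ) :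
    ⨆ i ∈ Finset.Icc 1 n, (regIncGamma (γ * i / n) z - regIncGamma (γ * i / n) w)
      ∈ Icc 0 (C * exp (-z)) := by
  have hC0 : 0 ≤ C := (one_div_nonneg.2 (Gamma_pos_of_pos one_pos).le).trans
    (hC 1 ⟨one_pos, le_rfl⟩)
  refine biSup_mem_Icc (by positivity) fun i hi => ?_
  obtain ⟨hi1, hin⟩ := Finset.mem_Icc.1 hi
  have hi1' : (1 : ℝ) ≤ i := by exact_mod_cast hi1
  have hin' : (i : ℝ) ≤ n := by exact_mod_cast hin
  have hb : γ * i / n ∈ Ioc 0 1 := by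
    refine ⟨div_pos (mul_pos hγ.1 (by linarith)) (by linarith),
      div_le_one_of_le₀ ?_ (by positivity)⟩
    nlinarith [hγ.1, hγ.2]
  obtain ⟨h0, hle⟩ := regIncGamma_sub_mem_Icc hb hz hzw
  exact ⟨h0, hle.trans (mul_le_mul_of_nonneg_right (hC _ hb) (exp_pos _).le)⟩

/-- **Uniform negligibility in the intermediate regime `nβ = 2γ`:**
`max_{1 ≤ i ≤ n} (Q(γi/n, φ_n(x)²/2) − Q(γi/n, φ_n(y)²/2)) → 0`. -/
theorem uniform_negligibility_gamma_regime (γ : ℝ) (hγ : γ ∈ Set.Ioo (0 : ℝ) 1)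
    (a : ℕ → ℝ)
    (ha : ∀ n : ℕ, a n = Real.sqrt (2 * Real.log ((n : ℝ) / (γ * Real.log (Real.log n)))))
    (φ : ℕ → ℝ → ℝ)
    (hφ : ∀ n : ℕ, ∀ x : ℝ, 0 ≤ x →
      φ n x = x / a n + a n
        + ((γ / 2 - 1) * Real.log (Real.log ((n : ℝ) / (γ * Real.log (Real.log n))))
            - Real.log ((2 : ℝ) ^ (-(γ / 2)) * Real.Gamma γ)) / a n)
    (x y : ℝ) (hx : 0 ≤ x) (hxy : x < y) :
    Tendsto (fun n : ℕ =>
        ⨆ i ∈ Finset.Icc 1 n,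
          (regIncGamma (γ * (i : ℝ) / n) (φ n x ^ 2 / 2)
            - regIncGamma (γ * (i : ℝ) / n) (φ n y ^ 2 / 2)))
      atTop (nhds 0) := by
  obtain ⟨C, hC⟩ := isCompact_Icc.bddAbove_image (continuous_one_div_Gamma.continuousOn
    (s := Icc (0 : ℝ) 1))
  have hL : Tendsto (fun n : ℕ => log (n / (γ * log (log n)))) atTop atTop :=
    tendsto_log_atTop.comp ((tendsto_div_mul_log_log_atTop hγ.1).comp
      tendsto_natCast_atTop_atTop)
  have hφx : Tendsto (φ · x) atTop atTop :=
    ((tendsto_sqrt_two_mul_add_div_atTop x (γ / 2 - 1) _).comp hL).congr fun n => by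
      rw [hφ n x hx, ha n]; rfl
  have hφxy : ∀ n, φ n x ≤ φ n y := fun n => by
    rw [hφ n x hx, hφ n y (hx.trans hxy.le)]
    gcongr
    exact ha n ▸ sqrt_nonneg _
  have hbound : ∀ᶠ n in atTop, ⨆ i ∈ Finset.Icc 1 n,
      (regIncGamma (γ * (i : ℝ) / n) (φ n x ^ 2 / 2)
        - regIncGamma (γ * (i : ℝ) / n) (φ n y ^ 2 / 2))
        ∈ Icc 0 (C * exp (-(φ n x ^ 2 / 2))) := by
    filter_upwards [hφx.eventually_ge_atTop 2] with n hn
    refine biSup_regIncGamma_sub_mem_Icc (Ioo_subset_Ioc_self hγ)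
      (fun b hb => hC ⟨b, Ioc_subset_Icc_self hb, rfl⟩) (by nlinarith) ?_ n
    gcongr
    exact hφxy n
  have hlim : Tendsto (fun n => C * exp (-(φ n x ^ 2 / 2))) atTop (𝓝 0) := by
    simpa using (tendsto_exp_neg_atTop_nhds_zero.comp
      (((tendsto_pow_atTop two_ne_zero).atTop_div_const two_pos).comp hφx)).const_mul C
  exact squeeze_zero' (hbound.mono fun _ h => h.1) (hbound.mono fun _ h => h.2) hlim
end
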